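/- Let γ > 0 with γ ≠ 1 and let a ∈ (0, π). Then there exists η ∈ (0,1) such that (sin(η(π-a)) / sin(ηπ))² = ((γ+1)/(γ-1))². -/

import Mathlib

/-! Clearing the denominator, it suffices to find a zero of
`g η = sin² (η b) - c sin² (η π)` with `b = π - a` and `c = ((γ + 1)/(γ - 1))² > 1`.
At `η = 1/2` we have `g = sin² (b/2) - c < 0`, at `η = 1` we have `g = sin² b > 0`,
so the intermediate value theorem gives a zero in `(1/2, 1)`, where `sin (η π) ≠ 0`. -/

open Real Set

theorem exists_mem_Ioo_sin_mul_sq_eq {b c : ℝ} (hb : b ∈ Ioo 0 π) (hc : 1 ≤ c) :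
    ∃ η ∈ Ioo (1 / 2 : ℝ) 1, sin (η * b) ^ 2 = c * sin (η * π) ^ 2 := by
  obtain ⟨hb0, hbπ⟩ := hb
  set g : ℝ → ℝ := fun η => sin (η * b) ^ 2 - c * sin (η * π) ^ 2
  have hg_half : g (1 / 2) < 0 := by
    have hcos : 0 < cos (1 / 2 * b) := cos_pos_of_mem_Ioo ⟨by linarith, by linarith⟩
    have hsin : sin (1 / 2 * π) = 1 := by rw [one_div_mul_eq_div, sin_pi_div_two]
    simp only [g, hsin]
    nlinarith [sin_sq_add_cos_sq (1 / 2 * b)]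
  have hg_one : 0 < g 1 := by
    simp only [g, one_mul, sin_pi]
    have := sin_pos_of_pos_of_lt_pi hb0 hbπ
    nlinarith
  obtain ⟨η, hη, hgη⟩ := intermediate_value_Ioo (by norm_num)
    (by fun_prop : Continuous g).continuousOn ⟨hg_half, hg_one⟩
  exact ⟨η, hη, sub_eq_zero.mp hgη⟩

theorem exists_mem_Ioo_sin_div_sin_sq_eq {b c : ℝ} (hb : b ∈ Ioo 0 π) (hc : 1 ≤ c) :
    ∃ η ∈ Ioo (0 : ℝ) 1, (sin (η * b) / sin (η * π)) ^ 2 = c := by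
  obtain ⟨η, ⟨hη_half, hη1⟩, h⟩ := exists_mem_Ioo_sin_mul_sq_eq hb hc
  have hη0 : 0 < η := by linarith
  have hsin : sin (η * π) ≠ 0 :=
    (sin_pos_of_pos_of_lt_pi (by positivity) (by nlinarith [pi_pos])).ne'
  refine ⟨η, ⟨hη0, hη1⟩, ?_⟩
  rw [div_pow, h]
  field_simp

theorem one_lt_add_one_div_sub_one_sq {γ : ℝ} (hγ : 0 < γ) (hγ1 : γ ≠ 1) :
    1 < ((γ + 1) / (γ - 1)) ^ 2 := by
  have hγ1' : γ - 1 ≠ 0 := sub_ne_zero.mpr hγ1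
  rw [div_pow, one_lt_div (by positivity)]
  nlinarith

theorem singularity_exponent_exists (γ a : ℝ) (hγ : 0 < γ) (hγ1 : γ ≠ 1)
    (ha : a ∈ Set.Ioo (0:ℝ) π) :
    ∃ η ∈ Set.Ioo (0:ℝ) 1,
      (Real.sin (η * (π - a)) / Real.sin (η * π)) ^ 2 = ((γ + 1) / (γ - 1)) ^ 2 :=
  exists_mem_Ioo_sin_div_sin_sq_eq ⟨by linarith [ha.2], by linarith [ha.1]⟩
    (one_lt_add_one_div_sub_one_sq hγ hγ1).le
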